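/- arXiv:1803.07285 — 10 statements merged into one kernel-verified Lean document; each statement's English description precedes it below -/
import Mathlib

section
/- Let S be a numerical semigroup generated by m₁,...,mₙ and k a positive integer with gcd(k, m₁) = 1. Let S_k be the numerical semigroup generated by m₁, k·m₂, ..., k·mₙ. Then for every natural number b, b ∈ S if and only if k·b ∈ S_k. -/
/-!
Multiplying a representation of `b` by `k` only changes the coefficient of `m₀`, which becomes
`k v₀`. Conversely, in a representation of `k b` by the lifted generators every term except
`w₀ m₀` is a multiple of `k`, so `k ∣ w₀` because `gcd(k, m₀) = 1`; replacing `w₀` by `w₀ / k`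
gives a representation of `k b` that is `k` times a representation of `b`.
-/

section Lifting

variable {ι : Type*} [Fintype ι] [DecidableEq ι]

def liftedGenerators (m : ι → ℕ) (i₀ : ι) (k : ℕ) (i : ι) : ℕ :=
  if i = i₀ then m i₀ else k * m i

theorem mul_sum_eq_sum_update_mul_liftedGenerators (m v : ι → ℕ) (i₀ : ι) (k : ℕ) :
    k * ∑ i, v i * m i =
      ∑ i, Function.update v i₀ (k * v i₀) i * liftedGenerators m i₀ k i := by
  rw [Finset.mul_sum]
  refine Finset.sum_congr rfl fun i _ => ?_
  by_cases hi : i = i₀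
  · subst hi
    simp only [Function.update_self, liftedGenerators, if_true]
    ring
  · simp only [Function.update_of_ne hi, liftedGenerators, hi, if_false]
    ring

theorem dvd_of_mul_eq_sum_mul_liftedGenerators {m w : ι → ℕ} {i₀ : ι} {k b : ℕ}
    (hkm : Nat.Coprime k (m i₀)) (hw : k * b = ∑ i, w i * liftedGenerators m i₀ k i) :
    k ∣ w i₀ := by
  rw [← Finset.add_sum_erase _ _ (Finset.mem_univ i₀)] at hw
  have hrest : k ∣ ∑ i ∈ Finset.univ.erase i₀, w i * liftedGenerators m i₀ k i :=
    Finset.dvd_sum fun i hi => by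
      simp only [liftedGenerators, Finset.ne_of_mem_erase hi, if_false]
      exact dvd_mul_of_dvd_right (dvd_mul_right k _) _
  have hfirst : k ∣ w i₀ * liftedGenerators m i₀ k i₀ :=
    (Nat.dvd_add_left hrest).mp (hw ▸ Dvd.intro b rfl)
  simp only [liftedGenerators, if_true] at hfirst
  exact hkm.dvd_of_dvd_mul_right hfirst

theorem exists_sum_iff_exists_sum_liftedGenerators (m : ι → ℕ) (i₀ : ι) {k : ℕ} (hk : 0 < k)
    (hkm : Nat.Coprime k (m i₀)) (b : ℕ) :
    (∃ v : ι → ℕ, b = ∑ i, v i * m i) ↔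
      ∃ w : ι → ℕ, k * b = ∑ i, w i * liftedGenerators m i₀ k i := by
  constructor
  · rintro ⟨v, rfl⟩
    exact ⟨_, mul_sum_eq_sum_update_mul_liftedGenerators m v i₀ k⟩
  · rintro ⟨w, hw⟩
    obtain ⟨c, hc⟩ := dvd_of_mul_eq_sum_mul_liftedGenerators hkm hw
    refine ⟨Function.update w i₀ c, Nat.eq_of_mul_eq_mul_left hk ?_⟩
    rw [hw, mul_sum_eq_sum_update_mul_liftedGenerators, Function.update_self,
      Function.update_idem, ← hc, Function.update_eq_self]

end Lifting

theorem lifting_membership_iff_general (n : ℕ) (m : Fin (n + 1) → ℕ)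
    (k : ℕ) (hk : 0 < k) (hkm : Nat.gcd k (m 0) = 1) (b : ℕ) :
    (∃ v : Fin (n + 1) → ℕ, b = ∑ i, v i * m i) ↔
      (∃ w : Fin (n + 1) → ℕ,
        k * b = ∑ i, w i * (if i = 0 then m 0 else k * m i)) :=
  exists_sum_iff_exists_sum_liftedGenerators m 0 hk hkm b

/-- Let S be the numerical semigroup generated by m₀,…,mₙ (positive,
with gcd 1) and S_k its k-lifting, generated by m₀, k·m₁, …, k·mₙ, where
gcd(k, m₀) = 1 and k > 0.  Then for every b : ℕ, b ∈ S ↔ k·b ∈ S_k. -/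
theorem lifting_membership_iff (n : ℕ) (m : Fin (n + 1) → ℕ)
    (hm : ∀ i, 0 < m i) (hcop : Finset.univ.gcd m = 1)
    (k : ℕ) (hk : 0 < k) (hkm : Nat.gcd k (m 0) = 1) (b : ℕ) :
    (∃ v : Fin (n + 1) → ℕ, b = ∑ i, v i * m i) ↔
      (∃ w : Fin (n + 1) → ℕ,
        k * b = ∑ i, w i * (if i = 0 then m 0 else k * m i)) :=
  lifting_membership_iff_general n m k hk hkm b
end

section
/- Let S be a numerical semigroup generated by m₁,...,mₙ and S_k its k-lifting (gcd(k,m₁)=1). The map sending the factorization (v₁, v₂, ..., vₙ) of b ∈ S to (k·v₁, v₂, ..., vₙ) is a bijection between the set of factorizations of b in S (with respect to generators m₁,...,mₙ) and the set of factorizations of k·b in S_k (with respect to generators m₁, km₂, ..., kmₙ). -/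
/-!
Off the distinguished generator, the weights of `S_k` are `k` times those of `S`, so lifting a
factorization of `b` multiplies its value by `k`. Conversely, in a factorization `w` of `k * b`
every term but `w j * m j` is divisible by `k`, hence so is `w j * m j`, and `gcd(k, m j) = 1`
forces `k ∣ w j`: dividing that coordinate by `k` gives the preimage.
-/

open Function

section Lifting

variable {ι : Type*} [DecidableEq ι]

theorem injective_update_apply_comp {α : Type*} (j : ι) {f : α → α} (hf : Injective f) :
    Injective fun v : ι → α => update v j (f (v j)) := by
  intro v w h
  funext i
  rcases eq_or_ne i j with rfl | hi
  · exact hf (by simpa using congrFun h i)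
  · simpa [update_of_ne hi] using congrFun h i

variable [Fintype ι]

theorem sum_update_mul_lift {R : Type*} [CommSemiring R] (j : ι) (k : R) (v m : ι → R) :
    ∑ i, update v j (k * v j) i * (if i = j then m j else k * m i) = k * ∑ i, v i * m i := by
  rw [Finset.mul_sum]
  refine Finset.sum_congr rfl fun i _ => ?_
  rcases eq_or_ne i j with rfl | hi
  · simp only [update_self, if_true]
    ring
  · simp only [update_of_ne hi, if_neg hi]
    ring

theorem dvd_apply_of_sum_lift_eq {j : ι} {k b : ℕ} {m w : ι → ℕ} (hkm : k.Coprime (m j))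
    (hw : ∑ i, w i * (if i = j then m j else k * m i) = k * b) : k ∣ w j := by
  rw [← Finset.add_sum_erase _ _ (Finset.mem_univ j), if_pos rfl] at hw
  have hrest : k ∣ ∑ i ∈ Finset.univ.erase j, w i * (if i = j then m j else k * m i) :=
    Finset.dvd_sum fun i hi => by
      rw [if_neg (Finset.ne_of_mem_erase hi)]
      exact dvd_mul_of_dvd_right (dvd_mul_right k _) _
  have hj : k ∣ w j * m j := (Nat.dvd_add_left hrest).mp (hw ▸ dvd_mul_right k b)
  exact hkm.dvd_of_dvd_mul_right hj

end Lifting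

theorem lifting_factorization_bijection_general (n : ℕ) (m : Fin (n + 1) → ℕ)
    (k : ℕ) (hk : 0 < k) (hkm : Nat.gcd k (m 0) = 1) (b : ℕ) :
    Set.BijOn (fun v : Fin (n + 1) → ℕ => Function.update v 0 (k * v 0))
      {v | ∑ i, v i * m i = b}
      {w | ∑ i, w i * (if i = 0 then m 0 else k * m i) = k * b} := by
  refine ⟨fun v hv => ?_, (injective_update_apply_comp 0 (mul_right_injective₀ hk.ne')).injOn,
    fun w hw => ?_⟩
  · exact (sum_update_mul_lift 0 k v m).trans (congrArg (k * ·) hv)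
  · have hdvd : k ∣ w 0 := dvd_apply_of_sum_lift_eq hkm hw
    have hlift : update (update w 0 (w 0 / k)) 0 (k * update w 0 (w 0 / k) 0) = w := by
      rw [update_self, update_idem, Nat.mul_div_cancel' hdvd, update_eq_self]
    refine ⟨update w 0 (w 0 / k), ?_, hlift⟩
    have hsum := sum_update_mul_lift 0 k (update w 0 (w 0 / k)) m
    rw [hlift, hw] at hsum
    exact (Nat.eq_of_mul_eq_mul_left hk hsum).symm

/-- (v₁,…,vₙ) ↦ (k·v₁, v₂, …, vₙ) is a bijection between the
factorizations of b with respect to m₁,…,mₙ and the factorizations of k·b with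
respect to m₁, km₂, …, kmₙ. -/
theorem lifting_factorization_bijection (n : ℕ) (m : Fin (n + 1) → ℕ)
    (hm : ∀ i, 0 < m i) (k : ℕ) (hk : 0 < k) (hkm : Nat.gcd k (m 0) = 1) (b : ℕ) :
    Set.BijOn (fun v : Fin (n + 1) → ℕ => Function.update v 0 (k * v 0))
      {v | ∑ i, v i * m i = b}
      {w | ∑ i, w i * (if i = 0 then m 0 else k * m i) = k * b} :=
  lifting_factorization_bijection_general n m k hk hkm b
end

section
/- Let R = K[x₁,...,xₙ] be the polynomial ring over a field K, graded by deg_S(xᵢ) = mᵢ where S is the numerical semigroup generated by m₁,...,mₙ, and let I_S be the kernel of the map R → K[t] sending xᵢ ↦ t^{mᵢ}. Let I_{S_k} be the toric ideal of the k-lifting S_k (generated by m₁, km₂,...,kmₙ, gcd(k,m₁)=1). Then the ring homomorphism f: R → R with f(x₁) = x₁^k and f(xᵢ) = xᵢ for i > 1 maps I_S into I_{S_k}; explicitly, if M - N ∈ I_S is a binomial, then f(M) - f(N) ∈ I_{S_k}. -/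
open MvPolynomial

/-!
The substitution `x₀ ↦ x₀ ^ k` followed by the parametrization of the lifting `S_k` sends
every variable to the same power of `t` as the parametrization of `S` followed by `t ↦ t ^ k`.
The two composites therefore agree, so the kernel of the parametrization of `S` lands in
the kernel of the parametrization of `S_k`.
-/

section Lifting

variable {R σ : Type*} [CommSemiring R] [DecidableEq σ]

theorem aeval_lift_comp_aeval_subst (w : σ → ℕ) (i₀ : σ) (k : ℕ) :
    (aeval fun i => (Polynomial.X : Polynomial R) ^ (if i = i₀ then w i₀ else k * w i)).comp
        (aeval fun i => if i = i₀ then (X i₀ : MvPolynomial σ R) ^ k else X i) =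
      (Polynomial.aeval (Polynomial.X ^ k : Polynomial R)).comp
        (aeval fun i => (Polynomial.X : Polynomial R) ^ w i) := by
  refine algHom_ext fun i => ?_
  by_cases hi : i = i₀
  · subst hi
    simp [← pow_mul, mul_comm]
  · simp [hi, ← pow_mul]

end Lifting

theorem lifting_map_toric_ideal_general (K : Type*) [Field K] (n : ℕ) (m : Fin (n + 1) → ℕ)
    (k : ℕ) :
    let φ : MvPolynomial (Fin (n + 1)) K →ₐ[K] Polynomial K :=
      aeval (fun i => (Polynomial.X : Polynomial K) ^ m i)
    let φk : MvPolynomial (Fin (n + 1)) K →ₐ[K] Polynomial K :=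
      aeval (fun i => (Polynomial.X : Polynomial K) ^ (if i = 0 then m 0 else k * m i))
    let f : MvPolynomial (Fin (n + 1)) K →ₐ[K] MvPolynomial (Fin (n + 1)) K :=
      aeval (fun i => if i = 0 then (X 0 : MvPolynomial (Fin (n + 1)) K) ^ k else X i)
    (∀ p, φ p = 0 → φk (f p) = 0) ∧
    (∀ u v : Fin (n + 1) →₀ ℕ,
      φ (monomial u 1 - monomial v 1) = 0 →
        φk (f (monomial u 1 - monomial v 1)) = 0) := by
  intro φ φk f
  have kernel_le : ∀ p, φ p = 0 → φk (f p) = 0 := fun p hp =>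
    calc φk (f p) = Polynomial.aeval (Polynomial.X ^ k) (φ p) :=
          DFunLike.congr_fun (aeval_lift_comp_aeval_subst m 0 k) p
      _ = 0 := by rw [hp, map_zero]
  exact ⟨kernel_le, fun u v => kernel_le _⟩

/-- the substitution f : x₁ ↦ x₁^k, xᵢ ↦ xᵢ (i > 1) maps the toric
ideal I_S (kernel of xᵢ ↦ t^{mᵢ}) into the toric ideal I_{S_k} (kernel of
x₁ ↦ t^{m₁}, xᵢ ↦ t^{k·mᵢ}); in particular this holds for every binomial
M − N ∈ I_S. -/
theorem lifting_map_toric_ideal (K : Type*) [Field K] (n : ℕ) (m : Fin (n + 1) → ℕ)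
    (hm : ∀ i, 0 < m i) (k : ℕ) (hk : 0 < k) (hkm : Nat.gcd k (m 0) = 1) :
    let φ : MvPolynomial (Fin (n + 1)) K →ₐ[K] Polynomial K :=
      aeval (fun i => (Polynomial.X : Polynomial K) ^ m i)
    let φk : MvPolynomial (Fin (n + 1)) K →ₐ[K] Polynomial K :=
      aeval (fun i => (Polynomial.X : Polynomial K) ^ (if i = 0 then m 0 else k * m i))
    let f : MvPolynomial (Fin (n + 1)) K →ₐ[K] MvPolynomial (Fin (n + 1)) K :=
      aeval (fun i => if i = 0 then (X 0 : MvPolynomial (Fin (n + 1)) K) ^ k else X i)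
    (∀ p, φ p = 0 → φk (f p) = 0) ∧
    (∀ u v : Fin (n + 1) →₀ ℕ,
      φ (monomial u 1 - monomial v 1) = 0 →
        φk (f (monomial u 1 - monomial v 1)) = 0) :=
  lifting_map_toric_ideal_general K n m k
end

section
/- Let S be the numerical semigroup generated by m₁,...,mₙ and S_k its k-lifting (gcd(k,m₁)=1). Suppose M = x₂^{u₂}⋯xₙ^{uₙ} and N' = x₁^{v₁'}x₂^{v₂}⋯xₙ^{vₙ} are monomials with v₁' > 0 such that M - N' lies in the toric ideal I_{S_k}. Then k divides v₁', and for N = x₁^{v₁'/k}x₂^{v₂}⋯xₙ^{vₙ}, the binomial M - N lies in the toric ideal I_S. -/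
/-!
A binomial `x^a - x^b` lies in the toric ideal of a grading `e` iff `a` and `b` have the same
`e`-weight. The `k`-lifted grading is `k • m` with the weight of `x₁` reset to `m₁`, so for `u` with
`u₁ = 0` the degree equation reads `k·deg u + k·v₁'·m₁ = k·deg v' + v₁'·m₁`. Hence `k ∣ v₁'·m₁`,
so `k ∣ v₁'` by coprimality, and dividing by `k` gives exactly the degree equation of `M - N` in `S`.
-/

open MvPolynomial

namespace Finsupp

variable {σ M R : Type*} [Semiring R] [AddCommMonoid M] [Module R M]

theorem weight_update_add (w : σ → M) (f : σ →₀ R) (i : σ) (a : R) :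
    weight w (f.update i a) + f i • w i = weight w f + a • w i := by
  conv_rhs => rw [← erase_add_single i f]
  rw [update_eq_erase_add_single, map_add, map_add, weight_single, weight_single]
  abel

theorem weight_update_left_add [Fintype σ] [DecidableEq σ] (w : σ → M) (f : σ →₀ R) (i : σ)
    (c : M) :
    weight (Function.update w i c) f + f i • w i = weight w f + f i • c := by
  simp only [weight_eq_sum, ← Finset.add_sum_erase _ _ (Finset.mem_univ i),
    Function.update_self]
  rw [Finset.sum_congr rfl fun j hj => by rw [Function.update_of_ne (Finset.ne_of_mem_erase hj)]]
  abel

theorem weight_mul_left (k : ℕ) (w : σ → ℕ) (f : σ →₀ ℕ) :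
    weight (fun i => k * w i) f = k * weight w f := by
  simp only [weight_apply, smul_eq_mul, Finsupp.mul_sum]
  exact Finsupp.sum_congr fun i _ => by ring

end Finsupp

theorem MvPolynomial.aeval_X_pow_monomial {σ R : Type*} [CommSemiring R] (e : σ → ℕ)
    (d : σ →₀ ℕ) :
    aeval (fun i => (Polynomial.X : Polynomial R) ^ e i) (monomial d 1 : MvPolynomial σ R) =
      Polynomial.X ^ Finsupp.weight e d := by
  rw [aeval_monomial, map_one, one_mul, Finsupp.weight_apply, Finsupp.prod, Finsupp.sum,
    ← Finset.prod_pow_eq_pow_sum]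
  exact Finset.prod_congr rfl fun i _ => by rw [← pow_mul, smul_eq_mul, mul_comm]

theorem MvPolynomial.aeval_X_pow_binomial_eq_zero_iff {σ R : Type*} [CommRing R] [Nontrivial R]
    (e : σ → ℕ) (a b : σ →₀ ℕ) :
    aeval (fun i => (Polynomial.X : Polynomial R) ^ e i)
      (monomial a 1 - monomial b 1 : MvPolynomial σ R) = 0 ↔
      Finsupp.weight e a = Finsupp.weight e b := by
  rw [map_sub, sub_eq_zero, aeval_X_pow_monomial, aeval_X_pow_monomial,
    Polynomial.X_pow_eq_monomial, Polynomial.X_pow_eq_monomial,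
    Polynomial.monomial_left_inj one_ne_zero]

theorem lifting_binomial_descends_general (K : Type*) [Field K] (n : ℕ) (m : Fin (n + 1) → ℕ)
    (k : ℕ) (hk : 0 < k) (hkm : Nat.gcd k (m 0) = 1)
    (u v' : Fin (n + 1) →₀ ℕ) (hu : u 0 = 0)
    (hker : aeval (fun i => (Polynomial.X : Polynomial K) ^ (if i = 0 then m 0 else k * m i))
      ((monomial u 1 : MvPolynomial (Fin (n + 1)) K) - monomial v' 1) = 0) :
    k ∣ v' 0 ∧
      aeval (fun i => (Polynomial.X : Polynomial K) ^ m i)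
        ((monomial u 1 : MvPolynomial (Fin (n + 1)) K)
          - monomial (v'.update 0 (v' 0 / k)) 1) = 0 := by
  have hlift : (fun i => if i = 0 then m 0 else k * m i) =
      Function.update (fun i => k * m i) 0 (m 0) :=
    funext fun i => by rw [Function.update_apply]
  have hdeg := (aeval_X_pow_binomial_eq_zero_iff _ u v').mp hker
  rw [hlift] at hdeg
  have hu_deg := Finsupp.weight_update_left_add (fun i => k * m i) u 0 (m 0)
  have hv_deg := Finsupp.weight_update_left_add (fun i => k * m i) v' 0 (m 0)
  simp only [hu, Finsupp.weight_mul_left, smul_eq_mul, zero_mul, add_zero] at hu_deg hv_deg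
  have key :
      k * Finsupp.weight m u + v' 0 * (k * m 0) = k * Finsupp.weight m v' + v' 0 * m 0 := by
    rw [← hu_deg, hdeg, hv_deg]
  have hdvd : k ∣ v' 0 := by
    refine (Nat.Coprime.dvd_mul_right hkm).mp
      ((Nat.dvd_add_right (dvd_mul_right k (Finsupp.weight m v'))).mp ?_)
    rw [← key]
    exact dvd_add (dvd_mul_right _ _) (dvd_mul_of_dvd_right (dvd_mul_right _ _) _)
  obtain ⟨c, hc⟩ := hdvd
  refine ⟨⟨c, hc⟩, ?_⟩
  rw [hc, Nat.mul_div_cancel_left c hk, aeval_X_pow_binomial_eq_zero_iff]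
  have hN := Finsupp.weight_update_add m v' 0 c
  rw [hc, smul_eq_mul, smul_eq_mul] at hN
  refine Nat.eq_of_mul_eq_mul_left hk ?_
  rw [hc] at key
  nlinarith

/-- if M = x₂^{u₂}⋯xₙ^{uₙ} and N' = x₁^{v₁'}⋯xₙ^{vₙ} with v₁' > 0
and M − N' ∈ I_{S_k}, then k ∣ v₁' and, with N = x₁^{v₁'/k}x₂^{v₂}⋯xₙ^{vₙ},
the binomial M − N lies in I_S. -/
theorem lifting_binomial_descends (K : Type*) [Field K] (n : ℕ) (m : Fin (n + 1) → ℕ)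
    (hm : ∀ i, 0 < m i) (k : ℕ) (hk : 0 < k) (hkm : Nat.gcd k (m 0) = 1)
    (u v' : Fin (n + 1) →₀ ℕ) (hu : u 0 = 0) (hv' : 0 < v' 0)
    (hker : aeval (fun i => (Polynomial.X : Polynomial K) ^ (if i = 0 then m 0 else k * m i))
      ((monomial u 1 : MvPolynomial (Fin (n + 1)) K) - monomial v' 1) = 0) :
    k ∣ v' 0 ∧
      aeval (fun i => (Polynomial.X : Polynomial K) ^ m i)
        ((monomial u 1 : MvPolynomial (Fin (n + 1)) K)
          - monomial (v'.update 0 (v' 0 / k)) 1) = 0 :=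
  lifting_binomial_descends_general K n m k hk hkm u v' hu hker
end

section
/- Let S be the numerical semigroup generated minimally by m₁ < m₂ < ⋯ < mₙ and let S_k be its k-lifting (gcd(k,m₁)=1, k ≥ 1). Suppose that for every tuple (u₂,...,uₙ) ∈ ℕ^{n-1} with u₂m₂+⋯+uₙmₙ ∈ m₁+S there exists a tuple (v₁,...,vₙ) ∈ ℕⁿ with v₁ > 0, v₁m₁+⋯+vₙmₙ = u₂m₂+⋯+uₙmₙ, and u₂+⋯+uₙ ≤ v₁+⋯+vₙ (Herzog's criterion for S). Then the analogous criterion holds for S_k: for every (u₂,...,uₙ) with u₂(km₂)+⋯+uₙ(kmₙ) ∈ m₁+S_k, there exists (w₁,v₂,...,vₙ) with w₁ > 0, w₁m₁+v₂(km₂)+⋯+vₙ(kmₙ) = u₂(km₂)+⋯+uₙ(kmₙ), and u₂+⋯+uₙ ≤ w₁+v₂+⋯+vₙ. -/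
/-!
Let `A = u₂ m₂ + ⋯ + uₙ mₙ`. Membership of `k A` in `m₁ + S_k` reads `k A = m₁ + c m₁ + k B` with
`B ∈ ⟨m₂, …, mₙ⟩`, so `k` divides `(c + 1) m₁`, hence `c + 1` since `gcd(k, m₁) = 1`; cancelling `k`
puts `A` in `m₁ + S`. Herzog's criterion for `S` then gives `A = v₁ m₁ + ∑ vᵢ mᵢ` with `v₁ > 0` and
`∑ uᵢ ≤ ∑ vᵢ`, and multiplying by `k` yields the witness `(k v₁, v₂, …, vₙ)` for `S_k`, whose total
degree is only larger.
-/

open Finset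

theorem Nat.exists_eq_add_mul_add_of_mul_eq {k a x y c : ℕ} (hka : k.Coprime a)
    (h : k * x = a + (c * a + k * y)) : ∃ t, x = a + (t * a + y) := by
  have hdvd : k ∣ (c + 1) * a := (Nat.dvd_add_right (dvd_mul_right k y)).mp <| by
    rw [← h.trans (by ring : a + (c * a + k * y) = k * y + (c + 1) * a)]
    exact dvd_mul_right k x
  obtain ⟨q, hq⟩ := hka.dvd_of_dvd_mul_right hdvd
  obtain ⟨t, rfl⟩ : ∃ t, q = t + 1 :=
    Nat.exists_eq_add_one.mpr (Nat.pos_of_ne_zero (by rintro rfl; simp at hq))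
  have hk : 0 < k := Nat.pos_of_ne_zero (by rintro rfl; simp at hq)
  refine ⟨t, Nat.eq_of_mul_eq_mul_left hk ?_⟩
  calc k * x = (c + 1) * a + k * y := by rw [h]; ring
    _ = _ := by rw [hq]; ring

section Lifting

variable {n : ℕ} (m : Fin (n + 1) → ℕ) (k : ℕ)

theorem sum_mul_lifted_generators (s : Fin (n + 1) → ℕ) :
    ∑ i, s i * (if i = 0 then m 0 else k * m i)
      = s 0 * m 0 + k * ∑ i : Fin n, s i.succ * m i.succ := by
  simp [Fin.sum_univ_succ, mul_left_comm _ k, ← mul_sum]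

variable {m k}

theorem exists_sum_eq_add_of_exists_lift (hkm : Nat.gcd k (m 0) = 1) {u : Fin n → ℕ}
    (hu : ∃ s : Fin (n + 1) → ℕ, ∑ i : Fin n, u i * (k * m i.succ)
      = m 0 + ∑ i, s i * (if i = 0 then m 0 else k * m i)) :
    ∃ s : Fin (n + 1) → ℕ, ∑ i : Fin n, u i * m i.succ = m 0 + ∑ i, s i * m i := by
  obtain ⟨s, hs⟩ := hu
  simp_rw [sum_mul_lifted_generators, mul_left_comm _ k, ← mul_sum] at hs
  obtain ⟨t, ht⟩ := Nat.exists_eq_add_mul_add_of_mul_eq hkm hs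
  exact ⟨Fin.cons t fun i => s i.succ, by simpa [Fin.sum_univ_succ] using ht⟩

theorem exists_lift_witness (hk : 0 < k) {u : Fin n → ℕ} {v : Fin (n + 1) → ℕ} (hv0 : 0 < v 0)
    (hv : ∑ i, v i * m i = ∑ i : Fin n, u i * m i.succ) (hle : ∑ i : Fin n, u i ≤ ∑ i, v i) :
    ∃ w : Fin (n + 1) → ℕ, 0 < w 0 ∧
      (w 0 * m 0 + ∑ i : Fin n, w i.succ * (k * m i.succ)
        = ∑ i : Fin n, u i * (k * m i.succ)) ∧
      (∑ i : Fin n, u i ≤ ∑ i, w i) := by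
  refine ⟨Fin.cons (k * v 0) fun i => v i.succ, by simpa using ⟨hk, hv0⟩, ?_, ?_⟩
  · rw [Fin.sum_univ_succ] at hv
    simp_rw [Fin.cons_zero, Fin.cons_succ, mul_left_comm _ k, ← mul_sum, ← hv]
    ring
  · rw [Fin.sum_univ_succ] at hle ⊢
    simp only [Fin.cons_zero, Fin.cons_succ]
    exact hle.trans (by gcongr; exact Nat.le_mul_of_pos_left _ hk)

end Lifting

theorem herzog_criterion_lifts_general (n : ℕ) (m : Fin (n + 1) → ℕ)
    (k : ℕ) (hkm : Nat.gcd k (m 0) = 1)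
    (hcrit : ∀ u : Fin n → ℕ,
      (∃ s : Fin (n + 1) → ℕ,
          ∑ i : Fin n, u i * m i.succ = m 0 + ∑ i, s i * m i) →
      ∃ v : Fin (n + 1) → ℕ, 0 < v 0 ∧
        (∑ i, v i * m i = ∑ i : Fin n, u i * m i.succ) ∧
        (∑ i : Fin n, u i ≤ ∑ i, v i)) :
    ∀ u : Fin n → ℕ,
      (∃ s : Fin (n + 1) → ℕ,
          ∑ i : Fin n, u i * (k * m i.succ)
            = m 0 + ∑ i, s i * (if i = 0 then m 0 else k * m i)) →
      ∃ w : Fin (n + 1) → ℕ, 0 < w 0 ∧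
        (w 0 * m 0 + ∑ i : Fin n, w i.succ * (k * m i.succ)
          = ∑ i : Fin n, u i * (k * m i.succ)) ∧
        (∑ i : Fin n, u i ≤ ∑ i, w i) := by
  intro u hu
  have hk : 0 < k := Nat.pos_of_ne_zero <| by
    -- `gcd 0 (m 0) = 1` forces `m 0 = 1`, and the lifted sum `0` is not in `1 + S_0`.
    rintro rfl
    obtain ⟨s, hs⟩ := hu
    simp [(Nat.gcd_zero_left _).symm.trans hkm, eq_comm (a := 0)] at hs
  obtain ⟨v, hv0, hv, hle⟩ := hcrit u (exists_sum_eq_add_of_exists_lift hkm hu)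
  exact exists_lift_witness hk hv0 hv hle

/-- if Herzog's criterion holds for S (generated minimally by
m₁ < m₂ < ⋯ < mₙ), then it holds for every k-lifting S_k with gcd(k,m₁)=1,
k ≥ 1. -/
theorem herzog_criterion_lifts (n : ℕ) (m : Fin (n + 1) → ℕ)
    (hm : ∀ i, 0 < m i) (hmono : StrictMono m)
    (k : ℕ) (hk : 1 ≤ k) (hkm : Nat.gcd k (m 0) = 1)
    (hcrit : ∀ u : Fin n → ℕ,
      (∃ s : Fin (n + 1) → ℕ,
          ∑ i : Fin n, u i * m i.succ = m 0 + ∑ i, s i * m i) →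
      ∃ v : Fin (n + 1) → ℕ, 0 < v 0 ∧
        (∑ i, v i * m i = ∑ i : Fin n, u i * m i.succ) ∧
        (∑ i : Fin n, u i ≤ ∑ i, v i)) :
    ∀ u : Fin n → ℕ,
      (∃ s : Fin (n + 1) → ℕ,
          ∑ i : Fin n, u i * (k * m i.succ)
            = m 0 + ∑ i, s i * (if i = 0 then m 0 else k * m i)) →
      ∃ w : Fin (n + 1) → ℕ, 0 < w 0 ∧
        (w 0 * m 0 + ∑ i : Fin n, w i.succ * (k * m i.succ)
          = ∑ i : Fin n, u i * (k * m i.succ)) ∧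
        (∑ i : Fin n, u i ≤ ∑ i, w i) :=
  herzog_criterion_lifts_general n m k hkm hcrit
end

section
/- Let S be the numerical semigroup generated minimally by m₁ < m₂ < ⋯ < mₙ. There exists a positive integer k₀ such that for all k ≥ k₀ with gcd(k,m₁)=1, the k-lifting S_k satisfies Herzog's criterion: for every (u₂,...,uₙ) ∈ ℕ^{n-1} with u₂(km₂)+⋯+uₙ(kmₙ) ∈ m₁+S_k, there exists (w₁,v₂,...,vₙ) ∈ ℕⁿ with w₁ > 0, w₁m₁+v₂(km₂)+⋯+vₙ(kmₙ) = u₂(km₂)+⋯+uₙ(kmₙ), and u₂+⋯+uₙ ≤ w₁+v₂+⋯+vₙ. -/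
/-!
Write `A = ∑ uᵢ mᵢ₊₁`, so that the lifted element is `k * A`. If `k * A ∈ m₀ + S_k`, reducing
the membership modulo `k` and using `gcd(k, m₀) = 1` shows `A ∈ q m₀ + ⟨m₁, …, mₙ⟩` with `q ≥ 1`.
Trading `m₀` copies of `mᵢ` for `mᵢ` copies of `m₀` brings every other coefficient below `m₀`,
giving `A = t m₀ + ∑ cᵢ mᵢ₊₁` with `t ≥ 1` and `∑ cᵢ mᵢ₊₁ ≤ m₀ ∑ mᵢ₊₁ =: C`. Lifting back,
`k * A = (k t) m₀ + ∑ cᵢ (k mᵢ₊₁)`, and once `k ≥ m₀ + C` the order of this representation,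
at least `k t ≥ t m₀ + C ≥ A`, dominates `∑ uᵢ`.
-/

open Finset

theorem exists_pos_eq_mul_add_of_coprime {k a A B r : ℕ} (hcop : k.Coprime a)
    (h : k * A = (r + 1) * a + k * B) : ∃ q, 0 < q ∧ A = q * a + B := by
  have hdvd : k ∣ (r + 1) * a :=
    (Nat.dvd_add_left (dvd_mul_right k B)).mp (h ▸ dvd_mul_right k A)
  obtain ⟨q, hq⟩ := hcop.dvd_of_dvd_mul_right hdvd
  have hk : k ≠ 0 := by rintro rfl; simp at hq
  refine ⟨q, Nat.pos_of_ne_zero (by rintro rfl; simp at hq), ?_⟩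
  apply Nat.eq_of_mul_eq_mul_left (Nat.pos_of_ne_zero hk)
  rw [h, hq]
  ring

section

variable {ι : Type*} (s : Finset ι)

theorem sum_mul_eq_sum_mod_mul_add (a : ℕ) (c b : ι → ℕ) :
    ∑ i ∈ s, c i * b i = (∑ i ∈ s, c i / a * b i) * a + ∑ i ∈ s, c i % a * b i := by
  rw [sum_mul, ← sum_add_distrib]
  refine sum_congr rfl fun i _ => ?_
  conv_lhs => rw [← Nat.div_add_mod (c i) a]
  ring

theorem sum_mod_mul_le {a : ℕ} (ha : 0 < a) (c b : ι → ℕ) :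
    ∑ i ∈ s, c i % a * b i ≤ a * ∑ i ∈ s, b i := by
  rw [mul_sum]
  exact sum_le_sum fun i _ => Nat.mul_le_mul_right _ (Nat.mod_lt _ ha).le

theorem exists_representation_le_mul {a q A : ℕ} (ha : 0 < a) (hq : 0 < q) (b c : ι → ℕ)
    (hA : A = q * a + ∑ i ∈ s, c i * b i) :
    ∃ (t : ℕ) (c' : ι → ℕ), 0 < t ∧ A = t * a + ∑ i ∈ s, c' i * b i ∧
      A ≤ t * (a + a * ∑ i ∈ s, b i) := by
  set t := q + ∑ i ∈ s, c i / a * b i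
  have hrep : A = t * a + ∑ i ∈ s, c i % a * b i := by
    rw [hA, sum_mul_eq_sum_mod_mul_add s a]
    ring
  have ht : 0 < t := Nat.add_pos_left hq _
  refine ⟨t, fun i => c i % a, ht, hrep, ?_⟩
  calc A ≤ t * a + a * ∑ i ∈ s, b i := hrep ▸ Nat.add_le_add_left (sum_mod_mul_le s ha c b) _
    _ ≤ t * a + t * (a * ∑ i ∈ s, b i) := Nat.add_le_add_left (Nat.le_mul_of_pos_left _ ht) _
    _ = t * (a + a * ∑ i ∈ s, b i) := by ring

theorem sum_mul_mul_left (k : ℕ) (u b : ι → ℕ) :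
    ∑ i ∈ s, u i * (k * b i) = k * ∑ i ∈ s, u i * b i := by
  rw [mul_sum]
  exact sum_congr rfl fun i _ => mul_left_comm _ _ _

end

theorem herzog_criterion_eventually_general (n : ℕ) (m : Fin (n + 1) → ℕ)
    (hm : ∀ i, 0 < m i) :
    ∃ k₀ : ℕ, 0 < k₀ ∧ ∀ k, k₀ ≤ k → Nat.gcd k (m 0) = 1 →
      ∀ u : Fin n → ℕ,
        (∃ s : Fin (n + 1) → ℕ,
            ∑ i : Fin n, u i * (k * m i.succ)
              = m 0 + ∑ i, s i * (if i = 0 then m 0 else k * m i)) →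
        ∃ w : Fin (n + 1) → ℕ, 0 < w 0 ∧
          (w 0 * m 0 + ∑ i : Fin n, w i.succ * (k * m i.succ)
            = ∑ i : Fin n, u i * (k * m i.succ)) ∧
          (∑ i : Fin n, u i ≤ ∑ i, w i) := by
  refine ⟨m 0 + m 0 * ∑ i : Fin n, m i.succ, Nat.add_pos_left (hm 0) _, ?_⟩
  rintro k hk hcop u ⟨s, hs⟩
  simp only [Fin.sum_univ_succ, Fin.succ_ne_zero, if_true, if_false, sum_mul_mul_left] at hs ⊢
  obtain ⟨q, hq, hA⟩ := exists_pos_eq_mul_add_of_coprime (r := s 0)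
    (B := ∑ i : Fin n, s i.succ * m i.succ) hcop (hs.trans (by ring))
  obtain ⟨t, c, ht, hAt, hle⟩ := exists_representation_le_mul univ (hm 0) hq _ _ hA
  have hk0 : 0 < k := (Nat.add_pos_left (hm 0) _).trans_le hk
  refine ⟨Fin.cons (k * t) c, Nat.mul_pos hk0 ht, ?_, ?_⟩
  · simp only [Fin.cons_zero, Fin.cons_succ]
    rw [hAt]
    ring
  · calc ∑ i, u i ≤ ∑ i, u i * m i.succ :=
          sum_le_sum fun i _ => Nat.le_mul_of_pos_right _ (hm _)
      _ ≤ t * k := hle.trans (Nat.mul_le_mul_left t hk)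
      _ ≤ k * t + ∑ i, c i := by rw [mul_comm]; exact Nat.le_add_right _ _
      _ = _ := by simp only [Fin.cons_zero, Fin.cons_succ]

/-- for any numerical semigroup S generated minimally by
m₁ < m₂ < ⋯ < mₙ there is k₀ such that for all k ≥ k₀ with gcd(k,m₁)=1 the
k-lifting S_k satisfies Herzog's criterion (hence has Cohen-Macaulay tangent
cone). -/
theorem herzog_criterion_eventually (n : ℕ) (m : Fin (n + 1) → ℕ)
    (hm : ∀ i, 0 < m i) (hmono : StrictMono m) :
    ∃ k₀ : ℕ, 0 < k₀ ∧ ∀ k, k₀ ≤ k → Nat.gcd k (m 0) = 1 →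
      ∀ u : Fin n → ℕ,
        (∃ s : Fin (n + 1) → ℕ,
            ∑ i : Fin n, u i * (k * m i.succ)
              = m 0 + ∑ i, s i * (if i = 0 then m 0 else k * m i)) →
        ∃ w : Fin (n + 1) → ℕ, 0 < w 0 ∧
          (w 0 * m 0 + ∑ i : Fin n, w i.succ * (k * m i.succ)
            = ∑ i : Fin n, u i * (k * m i.succ)) ∧
          (∑ i : Fin n, u i ≤ ∑ i, w i) :=
  herzog_criterion_eventually_general n m hm
end

section
/- Let S be the numerical semigroup generated by m₁,...,mₙ with gcd(k,m₁)=1, and let S_k be its k-lifting. Then for b, b' ∈ ℕ, kb − kb' ∈ S_k (as an integer difference lying in S_k) if and only if b − b' ∈ S. In particular, for subsets B, B' ⊆ S, the condition 'd − d' ∉ S for all d, d' ∈ B' is equivalent to 'kd − kd' ∉ S_k for all d, d' ∈ B'. -/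
/-!
Write `S_k`-elements as `w₀ m₁ + k t` with `t ∈ ⟨m₂, …, mₙ⟩`. If `k z` has this form, then `k ∣ w₀ m₁`,
hence `k ∣ w₀` since `gcd(k, m₁) = 1`, and cancelling `k` shows `z ∈ S`. Conversely, scaling a
representation of `z` in `S` by `k` (putting `k v₁` on `m₁`) represents `k z` in `S_k`.
-/

namespace NumericalSemigroup

variable {n : ℕ}

def natSpan (g : Fin (n + 1) → ℤ) : Set ℤ :=
  {z | ∃ v : Fin (n + 1) → ℕ, z = ∑ i, (v i : ℤ) * g i}

def lifting (k : ℤ) (g : Fin (n + 1) → ℤ) : Fin (n + 1) → ℤ :=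
  fun i => if i = 0 then g 0 else k * g i

lemma mem_natSpan_iff {g : Fin (n + 1) → ℤ} {z : ℤ} :
    z ∈ natSpan g ↔ ∃ (c : ℕ) (u : Fin n → ℕ), z = c * g 0 + ∑ i, (u i : ℤ) * g i.succ := by
  constructor
  · rintro ⟨v, rfl⟩
    exact ⟨v 0, fun i => v i.succ, Fin.sum_univ_succ _⟩
  · rintro ⟨c, u, rfl⟩
    refine ⟨Fin.cons c u, ?_⟩
    simp only [Fin.sum_univ_succ, Fin.cons_zero, Fin.cons_succ]

lemma mem_natSpan_lifting_iff {k : ℤ} {g : Fin (n + 1) → ℤ} {z : ℤ} :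
    z ∈ natSpan (lifting k g) ↔
      ∃ (c : ℕ) (u : Fin n → ℕ), z = c * g 0 + k * ∑ i, (u i : ℤ) * g i.succ := by
  simp only [mem_natSpan_iff, lifting, if_pos, Fin.succ_ne_zero, if_false, Finset.mul_sum]
  refine exists₂_congr fun c u => ?_
  simp only [mul_left_comm]

theorem mul_mem_natSpan_lifting_iff {k : ℕ} {g : Fin (n + 1) → ℤ} (hk : k ≠ 0)
    (hkg : IsCoprime (k : ℤ) (g 0)) (z : ℤ) :
    (k : ℤ) * z ∈ natSpan (lifting k g) ↔ z ∈ natSpan g := by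
  rw [mem_natSpan_lifting_iff, mem_natSpan_iff]
  constructor
  · rintro ⟨c, u, hz⟩
    have hdvd : (k : ℤ) ∣ c := hkg.dvd_of_dvd_mul_right
      ⟨z - ∑ i, (u i : ℤ) * g i.succ, by rw [mul_sub, hz]; ring⟩
    obtain ⟨c', rfl⟩ := Int.natCast_dvd_natCast.mp hdvd
    refine ⟨c', u, mul_left_cancel₀ (Int.natCast_ne_zero.mpr hk) ?_⟩
    rw [hz]
    push_cast
    ring
  · rintro ⟨c, u, rfl⟩
    exact ⟨k * c, u, by push_cast; ring⟩

end NumericalSemigroup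

open NumericalSemigroup in
theorem lifting_difference_membership_general (n : ℕ) (m : Fin (n + 1) → ℕ)
    (k : ℕ) (hk : 0 < k) (hkm : Nat.gcd k (m 0) = 1) :
    let SZ : Set ℤ := {z | ∃ v : Fin (n + 1) → ℕ, z = ∑ i, (v i : ℤ) * m i}
    let SkZ : Set ℤ := {z | ∃ w : Fin (n + 1) → ℕ,
      z = ∑ i, (w i : ℤ) * (if i = 0 then (m 0 : ℤ) else k * m i)}
    (∀ b b' : ℕ, ((k * b : ℤ) - k * b' ∈ SkZ ↔ (b : ℤ) - b' ∈ SZ)) ∧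
    (∀ B : Set ℕ, (∀ d ∈ B, ∀ d' ∈ B, (d : ℤ) - d' ∉ SZ) ↔
      (∀ d ∈ B, ∀ d' ∈ B, (k * d : ℤ) - k * d' ∉ SkZ)) := by
  intro SZ SkZ
  have hcop : IsCoprime (k : ℤ) (m 0 : ℤ) := Nat.isCoprime_iff_coprime.mpr hkm
  have key : ∀ b b' : ℕ, ((k * b : ℤ) - k * b' ∈ SkZ ↔ (b : ℤ) - b' ∈ SZ) := fun b b' => by
    rw [← mul_sub]
    exact mul_mem_natSpan_lifting_iff (g := fun i => (m i : ℤ)) hk.ne' hcop _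
  exact ⟨key, fun B => by simp only [key]⟩

/-- (kb − kb' : ℤ) ∈ S_k ↔ (b − b' : ℤ) ∈ S; in particular, for a
subset B of ℕ, differences of elements of B avoid S iff the corresponding
k-scaled differences avoid S_k. -/
theorem lifting_difference_membership (n : ℕ) (m : Fin (n + 1) → ℕ)
    (hm : ∀ i, 0 < m i) (hcop : Finset.univ.gcd m = 1)
    (k : ℕ) (hk : 0 < k) (hkm : Nat.gcd k (m 0) = 1) :
    let SZ : Set ℤ := {z | ∃ v : Fin (n + 1) → ℕ, z = ∑ i, (v i : ℤ) * m i}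
    let SkZ : Set ℤ := {z | ∃ w : Fin (n + 1) → ℕ,
      z = ∑ i, (w i : ℤ) * (if i = 0 then (m 0 : ℤ) else k * m i)}
    (∀ b b' : ℕ, ((k * b : ℤ) - k * b' ∈ SkZ ↔ (b : ℤ) - b' ∈ SZ)) ∧
    (∀ B : Set ℕ, (∀ d ∈ B, ∀ d' ∈ B, (d : ℤ) - d' ∉ SZ) ↔
      (∀ d ∈ B, ∀ d' ∈ B, (k * d : ℤ) - k * d' ∉ SkZ)) :=
  lifting_difference_membership_general n m k hk hkm
end

section
/- Let S be generated by m₁,...,mₙ and S_k its k-lifting (gcd(k,m₁)=1). If B = M − N is a binomial in I_S whose monomials M, N have no common variable factor, and x₁ divides neither M nor N, then B ∈ I_{S_k} as well. -/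
/-! Under the map `xᵢ ↦ t ^ wᵢ` a monomial `x ^ u` goes to `t ^ ⟨w, u⟩`, so a binomial lies in the
kernel exactly when its two exponent vectors have the same `w`-degree. Monomials avoiding `x₁` see
only the weights `k * mᵢ`, so their `S_k`-degree is `k` times their `S`-degree, and equal
`S`-degrees give equal `S_k`-degrees. -/

open MvPolynomial

section WeightedDegree

variable {σ : Type*} [Fintype σ]

theorem aeval_X_pow_monomial_one {R : Type*} [CommSemiring R] (w : σ → ℕ) (u : σ →₀ ℕ) :
    aeval (fun i => (Polynomial.X : Polynomial R) ^ w i) (monomial u (1 : R))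
      = Polynomial.X ^ ∑ i, w i * u i := by
  rw [aeval_monomial, map_one, one_mul, Finsupp.prod_fintype _ _ fun i => pow_zero _]
  simp_rw [← pow_mul]
  exact Finset.prod_pow_eq_pow_sum _ _ _

theorem aeval_X_pow_monomial_one_sub_eq_zero_iff {R : Type*} [CommRing R] [Nontrivial R]
    (w : σ → ℕ) (u v : σ →₀ ℕ) :
    aeval (fun i => (Polynomial.X : Polynomial R) ^ w i) (monomial u (1 : R) - monomial v 1) = 0
      ↔ ∑ i, w i * u i = ∑ i, w i * v i := by
  rw [map_sub, aeval_X_pow_monomial_one, aeval_X_pow_monomial_one, sub_eq_zero,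
    ← Polynomial.monomial_one_right_eq_X_pow, ← Polynomial.monomial_one_right_eq_X_pow,
    Polynomial.monomial_left_inj one_ne_zero]

theorem sum_ite_mul_eq_mul_sum_of_apply_eq_zero [DecidableEq σ] (m : σ → ℕ) (k : ℕ) {i₀ : σ}
    {u : σ →₀ ℕ} (hu : u i₀ = 0) :
    ∑ i, (if i = i₀ then m i₀ else k * m i) * u i = k * ∑ i, m i * u i := by
  rw [Finset.mul_sum]
  refine Finset.sum_congr rfl fun i _ => ?_
  by_cases h : i = i₀
  · simp [h, hu]
  · rw [if_neg h, mul_assoc]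

end WeightedDegree

theorem binomial_without_x1_lifts_general (K : Type*) [Field K] (n : ℕ)
    (m : Fin (n + 1) → ℕ)
    (k : ℕ)
    (u v : Fin (n + 1) →₀ ℕ)
    (hu0 : u 0 = 0) (hv0 : v 0 = 0)
    (hker : aeval (fun i => (Polynomial.X : Polynomial K) ^ m i)
      ((monomial u 1 : MvPolynomial (Fin (n + 1)) K) - monomial v 1) = 0) :
    aeval (fun i => (Polynomial.X : Polynomial K) ^ (if i = 0 then m 0 else k * m i))
      ((monomial u 1 : MvPolynomial (Fin (n + 1)) K) - monomial v 1) = 0 := by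
  rw [aeval_X_pow_monomial_one_sub_eq_zero_iff] at hker ⊢
  rw [sum_ite_mul_eq_mul_sum_of_apply_eq_zero m k hu0,
    sum_ite_mul_eq_mul_sum_of_apply_eq_zero m k hv0, hker]

/-- a binomial B = M − N ∈ I_S whose monomials share no variable
and involve neither of them the variable x₁ also lies in I_{S_k}. -/
theorem binomial_without_x1_lifts (K : Type*) [Field K] (n : ℕ)
    (m : Fin (n + 1) → ℕ) (hm : ∀ i, 0 < m i)
    (k : ℕ) (hk : 0 < k) (hkm : Nat.gcd k (m 0) = 1)
    (u v : Fin (n + 1) →₀ ℕ) (hcop : ∀ i, u i = 0 ∨ v i = 0)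
    (hu0 : u 0 = 0) (hv0 : v 0 = 0)
    (hker : aeval (fun i => (Polynomial.X : Polynomial K) ^ m i)
      ((monomial u 1 : MvPolynomial (Fin (n + 1)) K) - monomial v 1) = 0) :
    aeval (fun i => (Polynomial.X : Polynomial K) ^ (if i = 0 then m 0 else k * m i))
      ((monomial u 1 : MvPolynomial (Fin (n + 1)) K) - monomial v 1) = 0 :=
  binomial_without_x1_lifts_general K n m k u v hu0 hv0 hker
end

section
/- Let S be generated by m₁,...,mₙ, and suppose a binomial B = M − N ∈ I_S (with gcd(M,N) = 1 as monomials) is such that its lift B_k = M − N_k is expressible as a combination of binomials in I_{S_k} of S_k-degree strictly smaller (in the partial order s₁ <_{S_k} s₂ iff s₂ − s₁ ∈ S_k) than deg_{S_k}(B_k). Then B is expressible as a combination of binomials in I_S of S-degree strictly smaller than deg_S(B), and conversely. -/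
/-!
Lifting is the substitution `x₀ ↦ x₀ ^ k`, a ring endomorphism of `K[x]` turning a monomial of
`S`-degree `d` into one of `S_k`-degree `k d`; it sends `B` to `B_k` and binomials of `S`-degree
below `D` to binomials of `S_k`-degree below `k D`, which gives one direction. For the other, two
monomials of equal `S_k`-degree have `x₀`-exponents congruent modulo `k`, because
`gcd(k, m₀) = 1`; so every generator on the `S_k` side is `x₀ ^ s` times the lift of a
generator on the `S` side. Keeping only the monomials whose `x₀`-exponent is divisible by `k`
(and dividing that exponent by `k`) is an additive left inverse of lifting which is linear over
lifted polynomials; it maps the ideal generated on the `S_k` side back into the one on the `S`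
side, and `B_k` back to `B`.
-/

open MvPolynomial

namespace SemigroupLifting

section Binomials

variable {σ : Type*} [Fintype σ] (R : Type*) [CommRing R]

def lowerBinomials (g : σ → ℕ) (D : ℕ) : Set (MvPolynomial σ R) :=
  {p | ∃ a c : σ →₀ ℕ,
    p = monomial a 1 - monomial c 1 ∧
    (∑ i, a i * g i = ∑ i, c i * g i) ∧
    (∑ i, a i * g i) ≠ D ∧
    ∃ e : σ → ℕ, (∑ i, a i * g i) + ∑ i, e i * g i = D}

end Binomials

variable {σ : Type*} [DecidableEq σ] {k : ℕ} {i₀ : σ}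

variable (k i₀) in
noncomputable def liftExponent : (σ →₀ ℕ) →+ (σ →₀ ℕ) where
  toFun a := a.update i₀ (k * a i₀)
  map_zero' := by ext; simp
  map_add' a c := by
    ext i
    rcases eq_or_ne i i₀ with rfl | hi
    · simp [Finsupp.coe_update, Nat.mul_add]
    · simp [Finsupp.coe_update, hi]

lemma liftExponent_apply (a : σ →₀ ℕ) (i : σ) :
    liftExponent k i₀ a i = if i = i₀ then k * a i₀ else a i := by
  simp [liftExponent, Finsupp.coe_update, Function.update_apply]

lemma coe_liftExponent (a : σ →₀ ℕ) :
    ⇑(liftExponent k i₀ a) = Function.update a i₀ (k * a i₀) :=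
  Finsupp.coe_update _ _ _

lemma liftExponent_eq_self {a : σ →₀ ℕ} (h : a i₀ = 0) : liftExponent k i₀ a = a := by
  ext i
  rw [liftExponent_apply]
  split_ifs with hi
  · rw [hi, h, mul_zero]
  · rfl

lemma liftExponent_le_liftExponent_iff (hk : 0 < k) {a c : σ →₀ ℕ} :
    liftExponent k i₀ a ≤ liftExponent k i₀ c ↔ a ≤ c := by
  simp only [Finsupp.le_def, liftExponent_apply]
  refine forall_congr' fun i => ?_
  split_ifs with hi
  · subst hi; exact Nat.mul_le_mul_left_iff hk
  · rfl

lemma liftExponent_injective (hk : 0 < k) : Function.Injective (liftExponent k i₀ (σ := σ)) :=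
  fun _ _ h => le_antisymm ((liftExponent_le_liftExponent_iff hk).1 h.le)
    ((liftExponent_le_liftExponent_iff hk).1 h.ge)

lemma liftExponent_tsub (a c : σ →₀ ℕ) :
    liftExponent k i₀ (a - c) = liftExponent k i₀ a - liftExponent k i₀ c := by
  ext i
  simp only [liftExponent_apply, Finsupp.tsub_apply]
  split_ifs
  · exact Nat.mul_sub k _ _
  · rfl

lemma single_add_liftExponent_update {a : σ →₀ ℕ} {q r : ℕ} (h : a i₀ = k * q + r) :
    Finsupp.single i₀ r + liftExponent k i₀ (a.update i₀ q) = a := by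
  ext i
  rcases eq_or_ne i i₀ with rfl | hi
  · simp [liftExponent_apply, h, add_comm]
  · simp [liftExponent_apply, Finsupp.coe_update, hi]

def liftWeights (g : σ → ℕ) (k : ℕ) (i₀ : σ) : σ → ℕ :=
  fun i => if i = i₀ then g i₀ else k * g i

lemma sum_update_mul [Fintype σ] (g b : σ → ℕ) (q : ℕ) :
    ∑ i, Function.update b i₀ q i * g i = q * g i₀ + ∑ i, Function.update b i₀ 0 i * g i := by
  rw [Fintype.sum_eq_add_sum_compl i₀, Fintype.sum_eq_add_sum_compl i₀ (f := fun i => _ * _)]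
  simp only [Function.update_self, zero_mul, zero_add]
  congr 1
  refine Finset.sum_congr rfl fun i hi => ?_
  have hi : i ≠ i₀ := by simpa using hi
  rw [Function.update_of_ne hi, Function.update_of_ne hi]

lemma sum_mul_liftWeights [Fintype σ] (g b : σ → ℕ) :
    ∑ i, b i * liftWeights g k i₀ i = b i₀ * g i₀ + k * ∑ i, Function.update b i₀ 0 i * g i := by
  rw [← Function.update_eq_self i₀ b, sum_update_mul (liftWeights g k i₀), Function.update_idem,
    Function.update_self, Finset.mul_sum]
  simp only [liftWeights, ↓reduceIte]
  congr 1
  refine Finset.sum_congr rfl fun i _ => ?_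
  split_ifs with hi
  · simp [hi]
  · ring

lemma sum_update_mul_liftWeights [Fintype σ] (g b : σ → ℕ) :
    ∑ i, Function.update b i₀ (k * b i₀) i * liftWeights g k i₀ i = k * ∑ i, b i * g i := by
  rw [sum_mul_liftWeights, Function.update_idem, Function.update_self]
  conv_rhs => rw [← Function.update_eq_self i₀ b, sum_update_mul g]
  ring

section Semiring

variable {R : Type*} [CommSemiring R]

variable (k i₀) in
noncomputable def liftPoly : MvPolynomial σ R →+* MvPolynomial σ R :=
  AddMonoidAlgebra.mapDomainRingHom R (liftExponent k i₀)

variable (i₀) in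
noncomputable def descendPoly (hk : 0 < k) : MvPolynomial σ R →+ MvPolynomial σ R :=
  AddMonoidAlgebra.comapDomainAddMonoidHom (liftExponent k i₀) (liftExponent_injective hk)

lemma liftPoly_monomial (a : σ →₀ ℕ) (r : R) :
    liftPoly k i₀ (monomial a r) = monomial (liftExponent k i₀ a) r := by
  simp [liftPoly, ← single_eq_monomial]

lemma coeff_descendPoly (hk : 0 < k) (p : MvPolynomial σ R) (a : σ →₀ ℕ) :
    coeff a (descendPoly i₀ hk p) = coeff (liftExponent k i₀ a) p := by
  simp [descendPoly, coeff]

lemma descendPoly_mul_liftPoly (hk : 0 < k) (p q : MvPolynomial σ R) :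
    descendPoly i₀ hk (p * liftPoly k i₀ q) = descendPoly i₀ hk p * q := by
  induction q using MvPolynomial.induction_on' with
  | monomial c r =>
    ext a
    simp only [liftPoly_monomial, coeff_descendPoly, coeff_mul_monomial',
      liftExponent_le_liftExponent_iff hk, liftExponent_tsub]
  | add q₁ q₂ h₁ h₂ => rw [map_add, mul_add, map_add, h₁, h₂, mul_add]

lemma descendPoly_liftPoly (hk : 0 < k) (q : MvPolynomial σ R) :
    descendPoly i₀ hk (liftPoly k i₀ q) = q := by
  induction q using MvPolynomial.induction_on' with
  | monomial c r =>
    rw [liftPoly_monomial, ← single_eq_monomial, ← single_eq_monomial]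
    exact AddMonoidAlgebra.comapDomain_single_map _ (liftExponent_injective hk) c r
  | add q₁ q₂ h₁ h₂ => rw [map_add, map_add, h₁, h₂]

lemma descendPoly_mem_of_mem_map (hk : 0 < k) {I : Ideal (MvPolynomial σ R)}
    {x : MvPolynomial σ R} (hx : x ∈ I.map (liftPoly k i₀)) : descendPoly i₀ hk x ∈ I := by
  suffices ∀ r, descendPoly i₀ hk (r * x) ∈ I by simpa using this 1
  rw [Ideal.map] at hx
  induction hx using Submodule.span_induction with
  | mem _ hy =>
    obtain ⟨t, ht, rfl⟩ := hy
    exact fun r => descendPoly_mul_liftPoly hk r t ▸ I.mul_mem_left _ ht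
  | zero => simp
  | add _ _ _ _ hy hz => exact fun r => by rw [mul_add, map_add]; exact I.add_mem (hy r) (hz r)
  | smul c _ _ hy => exact fun r => by rw [smul_eq_mul, ← mul_assoc]; exact hy (r * c)

lemma monomial_eq_X_pow_mul_liftPoly {a : σ →₀ ℕ} {q r : ℕ} (h : a i₀ = k * q + r) :
    monomial a (1 : R) = X i₀ ^ r * liftPoly k i₀ (monomial (a.update i₀ q) 1) := by
  rw [liftPoly_monomial, X_pow_eq_monomial, monomial_mul, one_mul,
    single_add_liftExponent_update h]

end Semiring

variable [Fintype σ] {R : Type*} [CommRing R] {g : σ → ℕ} {D : ℕ}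

lemma liftPoly_mem_lowerBinomials (hk : 0 < k) {p : MvPolynomial σ R}
    (hp : p ∈ lowerBinomials R g D) :
    liftPoly k i₀ p ∈ lowerBinomials R (liftWeights g k i₀) (k * D) := by
  obtain ⟨a, c, rfl, hac, hD, e, he⟩ := hp
  refine ⟨liftExponent k i₀ a, liftExponent k i₀ c, by simp only [map_sub, liftPoly_monomial],
    ?_, ?_, Function.update e i₀ (k * e i₀), ?_⟩ <;>
    simp only [coe_liftExponent, sum_update_mul_liftWeights]
  · rw [hac]
  · exact fun h => hD (Nat.eq_of_mul_eq_mul_left hk h)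
  · rw [← mul_add, he]

lemma exists_eq_X_pow_mul_liftPoly (hk : 0 < k) (hkg : k.Coprime (g i₀)) {p : MvPolynomial σ R}
    (hp : p ∈ lowerBinomials R (liftWeights g k i₀) (k * D)) :
    ∃ s, ∃ t ∈ lowerBinomials R g D, p = X i₀ ^ s * liftPoly k i₀ t := by
  obtain ⟨a, c, rfl, hac, hD, e, he⟩ := hp
  rw [sum_mul_liftWeights, sum_mul_liftWeights] at hac he
  rw [sum_mul_liftWeights] at hD
  set s := a i₀ % k
  have hres : c i₀ % k = s := by
    refine (Nat.ModEq.cancel_right_of_coprime hkg ?_).symm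
    simpa [Nat.ModEq, Nat.add_mul_mod_self_left] using congrArg (· % k) hac
  obtain ⟨qa, ha⟩ : ∃ q, a i₀ = k * q + s := ⟨_, (Nat.div_add_mod _ _).symm⟩
  obtain ⟨qc, hc⟩ : ∃ q, c i₀ = k * q + s := ⟨_, hres ▸ (Nat.div_add_mod _ _).symm⟩
  rw [ha] at hac hD he
  rw [hc] at hac
  obtain ⟨t, ht⟩ : k ∣ s + e i₀ := by
    refine hkg.dvd_of_dvd_mul_right ((Nat.dvd_add_right (dvd_mul_right k
      (qa * g i₀ + ∑ i, Function.update a i₀ 0 i * g i + ∑ i, Function.update e i₀ 0 i * g i))).mp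
      ⟨D, by linarith⟩)
  refine ⟨s, _, ⟨a.update i₀ qa, c.update i₀ qc, rfl, ?_, ?_, Function.update e i₀ t, ?_⟩,
    by rw [map_sub, mul_sub, ← monomial_eq_X_pow_mul_liftPoly ha,
      ← monomial_eq_X_pow_mul_liftPoly hc]⟩ <;>
    simp only [Finsupp.coe_update, sum_update_mul g a qa, sum_update_mul g c qc, sum_update_mul g e t]
  · apply Nat.eq_of_mul_eq_mul_left hk
    linarith
  · intro h
    apply hD
    have := congrArg (k * ·) h
    linarith [Nat.zero_le (s * g i₀), Nat.zero_le (e i₀ * g i₀),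
      Nat.zero_le (k * ∑ i, Function.update e i₀ 0 i * g i)]
  · apply Nat.eq_of_mul_eq_mul_left hk
    have := congrArg (· * g i₀) ht
    linarith

theorem liftPoly_mem_span_lowerBinomials_iff (hk : 0 < k) (hkg : k.Coprime (g i₀))
    (x : MvPolynomial σ R) :
    liftPoly k i₀ x ∈ Ideal.span (lowerBinomials R (liftWeights g k i₀) (k * D)) ↔
      x ∈ Ideal.span (lowerBinomials R g D) := by
  constructor
  · intro hx
    rw [← descendPoly_liftPoly (i₀ := i₀) hk x]
    refine descendPoly_mem_of_mem_map hk (Ideal.span_le.2 (fun p hp => ?_) hx)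
    obtain ⟨s, t, ht, rfl⟩ := exists_eq_X_pow_mul_liftPoly hk hkg hp
    exact Ideal.mul_mem_left _ _ (Ideal.mem_map_of_mem _ (Ideal.subset_span ht))
  · intro hx
    have hmap := Ideal.mem_map_of_mem (liftPoly k i₀) hx
    rw [Ideal.map_span] at hmap
    refine Ideal.span_mono ?_ hmap
    rintro _ ⟨p, hp, rfl⟩
    exact liftPoly_mem_lowerBinomials hk hp

end SemigroupLifting

open SemigroupLifting

theorem lifting_preserves_redundancy_general (K : Type*) [Field K] (n : ℕ)
    (m : Fin (n + 1) → ℕ)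
    (k : ℕ) (hk : 0 < k) (hkm : Nat.gcd k (m 0) = 1)
    (u w : Fin (n + 1) →₀ ℕ) (hu0 : u 0 = 0) :
    let gk : Fin (n + 1) → ℕ := fun i => if i = 0 then m 0 else k * m i
    let smaller : (Fin (n + 1) → ℕ) → ℕ → Set (MvPolynomial (Fin (n + 1)) K) :=
      fun g D => {p | ∃ a c : Fin (n + 1) →₀ ℕ,
        p = monomial a 1 - monomial c 1 ∧
        (∑ i, a i * g i = ∑ i, c i * g i) ∧
        (∑ i, a i * g i) ≠ D ∧
        ∃ e : Fin (n + 1) → ℕ, (∑ i, a i * g i) + ∑ i, e i * g i = D}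
    let B : MvPolynomial (Fin (n + 1)) K := monomial u 1 - monomial w 1
    let Bk : MvPolynomial (Fin (n + 1)) K :=
      monomial u 1 - monomial (w.update 0 (k * w 0)) 1
    (B ∈ Ideal.span (smaller m (∑ i, u i * m i)) ↔
      Bk ∈ Ideal.span (smaller gk (k * ∑ i, u i * m i))) := by
  intro gk smaller B Bk
  have hBk : liftPoly k 0 B = Bk := by
    rw [map_sub, liftPoly_monomial, liftPoly_monomial, liftExponent_eq_self hu0]
    rfl
  rw [← hBk]
  exact (liftPoly_mem_span_lowerBinomials_iff hk hkm B).symm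

/-- a binomial B = M − N ∈ I_S (with gcd(M,N) = 1, x₁ ∤ M) is a
combination of binomials of I_S of strictly smaller S-degree (for the order
d' <_S d iff d − d' ∈ S, d' ≠ d) if and only if its lift B_k = M − N_k is a
combination of binomials of I_{S_k} of S_k-degree strictly smaller than
deg_{S_k}(B_k) = k·deg_S(B). -/
theorem lifting_preserves_redundancy (K : Type*) [Field K] (n : ℕ)
    (m : Fin (n + 1) → ℕ) (hm : ∀ i, 0 < m i)
    (k : ℕ) (hk : 0 < k) (hkm : Nat.gcd k (m 0) = 1)
    (u w : Fin (n + 1) →₀ ℕ) (hcop : ∀ i, u i = 0 ∨ w i = 0) (hu0 : u 0 = 0)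
    (hdeg : ∑ i, u i * m i = ∑ i, w i * m i) :
    let gk : Fin (n + 1) → ℕ := fun i => if i = 0 then m 0 else k * m i
    let smaller : (Fin (n + 1) → ℕ) → ℕ → Set (MvPolynomial (Fin (n + 1)) K) :=
      fun g D => {p | ∃ a c : Fin (n + 1) →₀ ℕ,
        p = monomial a 1 - monomial c 1 ∧
        (∑ i, a i * g i = ∑ i, c i * g i) ∧
        (∑ i, a i * g i) ≠ D ∧
        ∃ e : Fin (n + 1) → ℕ, (∑ i, a i * g i) + ∑ i, e i * g i = D}
    let B : MvPolynomial (Fin (n + 1)) K := monomial u 1 - monomial w 1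
    let Bk : MvPolynomial (Fin (n + 1)) K :=
      monomial u 1 - monomial (w.update 0 (k * w 0)) 1
    (B ∈ Ideal.span (smaller m (∑ i, u i * m i)) ↔
      Bk ∈ Ideal.span (smaller gk (k * ∑ i, u i * m i))) :=
  lifting_preserves_redundancy_general K n m k hk hkm u w hu0
end

section
/- Let S be a numerical semigroup generated by m₁,...,mₙ with gcd(k,m₁)=1, and S_k its k-lifting. For b ∈ S, the number of factorizations of b in S equals the number of factorizations of kb in S_k: |{(v₁,...,vₙ) ∈ ℕⁿ : Σvᵢmᵢ = b}| = |{(w₁,v₂,...,vₙ) ∈ ℕⁿ : w₁m₁ + Σ_{i≥2} vᵢ(kmᵢ) = kb}|. -/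
/-!
Multiplying the first coordinate by `k` maps factorizations of `b` over `m₁, …, mₙ` injectively
to factorizations of `k b` over `m₁, k m₂, …, k mₙ`. It is onto because in a factorization
`w₁ m₁ + k (⋯) = k b` the prime-to-`k` generator `m₁` forces `k ∣ w₁`.
-/

open Function

section Lifting

variable {ι : Type*} [DecidableEq ι]

def liftWeights (i₀ : ι) (k : ℕ) (m : ι → ℕ) : ι → ℕ :=
  fun i => if i = i₀ then m i₀ else k * m i

def scaleAt (i₀ : ι) (k : ℕ) (v : ι → ℕ) : ι → ℕ :=
  update v i₀ (k * v i₀)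

variable (i₀ : ι) {k : ℕ}

theorem scaleAt_injective (hk : 0 < k) : Injective (scaleAt i₀ k) := by
  intro v v' h
  funext i
  have hi := congrFun h i
  by_cases hii₀ : i = i₀
  · subst hii₀
    simp only [scaleAt, update_self] at hi
    exact Nat.eq_of_mul_eq_mul_left hk hi
  · simpa only [scaleAt, update_of_ne hii₀] using hi

variable [Fintype ι]

def factorizations (m : ι → ℕ) (b : ℕ) : Set (ι → ℕ) :=
  {v | ∑ i, v i * m i = b}

theorem sum_scaleAt_mul_liftWeights (m v : ι → ℕ) :
    ∑ i, scaleAt i₀ k v i * liftWeights i₀ k m i = k * ∑ i, v i * m i := by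
  rw [Finset.mul_sum]
  refine Finset.sum_congr rfl fun i _ => ?_
  by_cases hii₀ : i = i₀
  · subst hii₀
    simp only [scaleAt, liftWeights, update_self, if_true]
    ring
  · simp only [scaleAt, liftWeights, update_of_ne hii₀, hii₀, if_false]
    ring

theorem dvd_of_mem_factorizations_liftWeights {m : ι → ℕ} (hkm : k.Coprime (m i₀))
    {b : ℕ} {w : ι → ℕ} (hw : w ∈ factorizations (liftWeights i₀ k m) (k * b)) :
    k ∣ w i₀ := by
  have hsplit : ∑ i, w i * liftWeights i₀ k m i =
      w i₀ * m i₀ + ∑ i ∈ Finset.univ.erase i₀, w i * liftWeights i₀ k m i := by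
    rw [← Finset.add_sum_erase _ _ (Finset.mem_univ i₀)]
    simp only [liftWeights, if_true]
  have hrest : k ∣ ∑ i ∈ Finset.univ.erase i₀, w i * liftWeights i₀ k m i :=
    Finset.dvd_sum fun i hi => by
      simp only [liftWeights, Finset.ne_of_mem_erase hi, if_false]
      exact (dvd_mul_right k (m i)).mul_left (w i)
  have hfirst : k ∣ w i₀ * m i₀ := by
    refine (Nat.dvd_add_left hrest).mp ?_
    rw [← hsplit, show ∑ i, w i * liftWeights i₀ k m i = k * b from hw]
    exact dvd_mul_right k b
  exact hkm.dvd_of_dvd_mul_right hfirst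

theorem image_scaleAt_factorizations (hk : 0 < k) {m : ι → ℕ} (hkm : k.Coprime (m i₀))
    (b : ℕ) :
    scaleAt i₀ k '' factorizations m b = factorizations (liftWeights i₀ k m) (k * b) := by
  ext w
  constructor
  · rintro ⟨v, hv, rfl⟩
    show _ = _
    rw [sum_scaleAt_mul_liftWeights, show ∑ i, v i * m i = b from hv]
  · intro hw
    obtain ⟨c, hc⟩ := dvd_of_mem_factorizations_liftWeights i₀ hkm hw
    have hscale : scaleAt i₀ k (update w i₀ c) = w := by
      funext i
      by_cases hii₀ : i = i₀
      · subst hii₀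
        simp only [scaleAt, update_self, hc]
      · simp only [scaleAt, update_of_ne hii₀]
    refine ⟨update w i₀ c, Nat.eq_of_mul_eq_mul_left hk ?_, hscale⟩
    rw [← sum_scaleAt_mul_liftWeights, hscale]
    exact hw

theorem ncard_factorizations_eq_ncard_factorizations_liftWeights (hk : 0 < k) {m : ι → ℕ}
    (hkm : k.Coprime (m i₀)) (b : ℕ) :
    (factorizations m b).ncard = (factorizations (liftWeights i₀ k m) (k * b)).ncard := by
  rw [← image_scaleAt_factorizations i₀ hk hkm,
    Set.ncard_image_of_injective _ (scaleAt_injective i₀ hk)]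

end Lifting

theorem lifting_factorization_count_general (n : ℕ) (m : Fin (n + 1) → ℕ)
    (k : ℕ) (hk : 0 < k) (hkm : Nat.gcd k (m 0) = 1)
    (b : ℕ) :
    {v : Fin (n + 1) → ℕ | ∑ i, v i * m i = b}.ncard =
      {w : Fin (n + 1) → ℕ |
        ∑ i, w i * (if i = 0 then m 0 else k * m i) = k * b}.ncard :=
  ncard_factorizations_eq_ncard_factorizations_liftWeights 0 hk hkm b

/-- the number of factorizations of b in S equals the number of
factorizations of kb in the k-lifting S_k. -/
theorem lifting_factorization_count (n : ℕ) (m : Fin (n + 1) → ℕ)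
    (hm : ∀ i, 0 < m i) (k : ℕ) (hk : 0 < k) (hkm : Nat.gcd k (m 0) = 1)
    (b : ℕ) (hb : ∃ v : Fin (n + 1) → ℕ, b = ∑ i, v i * m i) :
    {v : Fin (n + 1) → ℕ | ∑ i, v i * m i = b}.ncard =
      {w : Fin (n + 1) → ℕ |
        ∑ i, w i * (if i = 0 then m 0 else k * m i) = k * b}.ncard :=
  lifting_factorization_count_general n m k hk hkm b
end
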